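/- arXiv:2604.25973 — 5 statements merged into one kernel-verified Lean document; each statement's English description precedes it below -/
import Mathlib

section
/- If F_n = 2^(2^n) + 1 is composite and p is a prime dividing F_n (n ≥ 2), then writing p = k·2^(n+2) + 1, the cofactor k satisfies k > 1 and k is not a power of 2; equivalently, p is not of the form 2^m + 1. -/
theorem stmt3 (n p : ℕ) (hn : 2 ≤ n) (hcomp : ¬ Nat.Prime (2 ^ 2 ^ n + 1))
    (hp : Nat.Prime p) (hdvd : p ∣ 2 ^ 2 ^ n + 1) :
    (∀ k : ℕ, p = k * 2 ^ (n + 2) + 1 → 1 < k ∧ ∀ t : ℕ, k ≠ 2 ^ t) ∧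
    (∀ m : ℕ, p ≠ 2 ^ m + 1) := by
  haveI : Fact p.Prime := ⟨hp⟩
  have hpodd : p ≠ 2 := by
    rintro rfl
    have h2 : (2 : ℕ) ∣ 2 ^ 2 ^ n := dvd_pow_self 2 (Nat.pos_of_ne_zero (by positivity)).ne'
    omega
  have hple : p ≤ 2 ^ 2 ^ n + 1 := Nat.le_of_dvd (by positivity) hdvd
  -- 2^(2^n) = -1 in ZMod p
  have hzero : ((2 ^ 2 ^ n + 1 : ℕ) : ZMod p) = 0 :=
    (ZMod.natCast_eq_zero_iff _ _).2 hdvd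
  have hneg : (2 : ZMod p) ^ 2 ^ n = -1 := by
    push_cast at hzero
    linear_combination hzero
  have hne : (-1 : ZMod p) ≠ 1 := by
    haveI : Fact (2 < p) := ⟨by have := hp.two_le; omega⟩
    exact ZMod.neg_one_ne_one
  -- order of 2 mod p is 2^(n+1)
  have hord : orderOf (2 : ZMod p) = 2 ^ (n + 1) := by
    have hdvd1 : orderOf (2 : ZMod p) ∣ 2 ^ (n + 1) := by
      apply orderOf_dvd_of_pow_eq_one
      rw [pow_succ, pow_mul, hneg]
      ring
    obtain ⟨j, hj, hjeq⟩ := (Nat.dvd_prime_pow Nat.prime_two).1 hdvd1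
    have hjn : ¬ j ≤ n := by
      intro hjn
      have : orderOf (2 : ZMod p) ∣ 2 ^ n := hjeq ▸ pow_dvd_pow 2 hjn
      have h1 : (2 : ZMod p) ^ 2 ^ n = 1 := orderOf_dvd_iff_pow_eq_one.1 this
      rw [hneg] at h1
      exact hne h1
    have : j = n + 1 := by omega
    rw [hjeq, this]
  have key : ∀ m : ℕ, p ≠ 2 ^ m + 1 := by
    intro m hm
    have hm0 : m ≠ 0 := by rintro rfl; simp at hm; omega
    -- 2^m = -1 in ZMod p
    have hmz : ((2 ^ m + 1 : ℕ) : ZMod p) = 0 := by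
      rw [← hm]; exact ZMod.natCast_self p
    have hmneg : (2 : ZMod p) ^ m = -1 := by
      push_cast at hmz
      linear_combination hmz
    have hdm : orderOf (2 : ZMod p) ∣ 2 * m := by
      apply orderOf_dvd_of_pow_eq_one
      rw [mul_comm, pow_mul, hmneg]
      ring
    rw [hord] at hdm
    have h2n : 2 ^ n ∣ m := by
      have : 2 * 2 ^ n ∣ 2 * m := by rw [← pow_succ']; exact hdm
      exact (mul_dvd_mul_iff_left (by norm_num : (2:ℕ) ≠ 0)).1 this
    have hmle : m ≤ 2 ^ n := by
      have h1 : 2 ^ m ≤ 2 ^ 2 ^ n := by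
        have hple' := hple; rw [hm] at hple'; omega
      exact (Nat.pow_le_pow_iff_right (by norm_num)).1 h1
    have : m = 2 ^ n := Nat.le_antisymm hmle (Nat.le_of_dvd (Nat.pos_of_ne_zero hm0) h2n)
    rw [this] at hm
    exact hcomp (hm ▸ hp)
  refine ⟨fun k hk => ?_, key⟩
  constructor
  · rcases Nat.lt_or_ge k 2 with h | h
    · interval_cases k
      · simp at hk; exact absurd hk hp.ne_one
      · exact absurd hk (by simpa using key (n + 2))
    · omega
  · intro t ht
    rw [ht, ← pow_add] at hk
    exact key (t + (n + 2)) hk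
end

section
/- Necessary condition for pseudoprimality: let n ≥ 5 and let a be coprime to F_n = 2^(2^n) + 1. If F_n is composite and a^(F_n - 1) ≡ 1 (mod F_n), then a^((F_n - 1)/4) ≡ 1 (mod F_n). -/
/-!
If `a ^ 2 ^ 2 ^ n ≡ 1` modulo a prime power `p ^ k ∣ F_n`, the order of `a` modulo `p ^ k` is a
power of two dividing `φ (p ^ k) = p ^ (k - 1) * (p - 1)`, hence it divides `p - 1`. Since `F_n`
is composite and prime to `6`, its cofactor to `p` is at least `5`, so `p ≤ (F_n - 1) / 4`; thus the
order is a power of two at most `2 ^ (2 ^ n - 2)` and divides it. Gluing over all prime powers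
dividing `F_n` gives the congruence modulo `F_n`.
-/

open Nat

theorem pow_two_pow_eq_one_of_orderOf_le {M : Type*} [Monoid M] {x : M} {m j : ℕ}
    (hx : x ^ 2 ^ m = 1) (hle : orderOf x ≤ 2 ^ j) : x ^ 2 ^ j = 1 := by
  obtain ⟨i, -, hi⟩ := (Nat.dvd_prime_pow Nat.prime_two).1 (orderOf_dvd_of_pow_eq_one hx)
  rw [hi, Nat.pow_le_pow_iff_right one_lt_two] at hle
  exact orderOf_dvd_iff_pow_eq_one.1 (hi ▸ pow_dvd_pow 2 hle)

theorem ZMod.orderOf_dvd_totient_of_pow_eq_one {q e : ℕ} {x : ZMod q} (hx : x ^ e = 1)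
    (he : e ≠ 0) : orderOf x ∣ φ q := by
  obtain ⟨u, rfl⟩ := IsUnit.of_pow_eq_one hx he
  rw [orderOf_units]
  exact orderOf_dvd_of_pow_eq_one (ZMod.pow_totient u)

theorem ZMod.orderOf_dvd_sub_one_of_pow_two_pow_eq_one {p k m : ℕ} (hp : p.Prime) (hodd : Odd p)
    {x : ZMod (p ^ k)} (hx : x ^ 2 ^ m = 1) : orderOf x ∣ p - 1 := by
  have htot := ZMod.orderOf_dvd_totient_of_pow_eq_one hx (pow_ne_zero m two_ne_zero)
  rcases k.eq_zero_or_pos with rfl | hk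
  · exact (htot.trans (by simp)).trans (one_dvd _)
  rw [Nat.totient_prime_pow hp hk] at htot
  have hcop : (orderOf x).Coprime (p ^ (k - 1)) :=
    (Nat.Coprime.pow _ _ (coprime_two_left.2 hodd)).coprime_dvd_left (orderOf_dvd_of_pow_eq_one hx)
  exact hcop.dvd_of_dvd_mul_left htot

theorem Nat.ModEq.pow_two_pow_of_sub_one_le {p k m j a : ℕ} (hp : p.Prime) (hodd : Odd p)
    (ha : a ^ 2 ^ m ≡ 1 [MOD p ^ k]) (hpj : p - 1 ≤ 2 ^ j) : a ^ 2 ^ j ≡ 1 [MOD p ^ k] := by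
  rw [← ZMod.natCast_eq_natCast_iff] at ha ⊢
  push_cast at ha ⊢
  refine pow_two_pow_eq_one_of_orderOf_le ha ?_
  exact (Nat.le_of_dvd (by have := hp.two_le; omega)
    (ZMod.orderOf_dvd_sub_one_of_pow_two_pow_eq_one hp hodd ha)).trans hpj

theorem Nat.ModEq.of_forall_prime_pow_dvd {N a b : ℕ}
    (h : ∀ p k, p.Prime → 0 < k → p ^ k ∣ N → a ≡ b [MOD p ^ k]) : a ≡ b [MOD N] := by
  rw [Nat.modEq_iff_dvd, Int.natCast_dvd, Nat.dvd_iff_prime_pow_dvd_dvd]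
  intro p k hp hpk
  rcases k.eq_zero_or_pos with rfl | hk
  · simp
  · exact Int.natCast_dvd.1 (Nat.modEq_iff_dvd.1 (h p k hp hk hpk))

theorem Nat.five_mul_le_of_prime_dvd {N p : ℕ} (hp : p.Prime) (hpN : p ∣ N) (hN : ¬ N.Prime)
    (h2 : ¬ 2 ∣ N) (h3 : ¬ 3 ∣ N) : 5 * p ≤ N := by
  obtain ⟨c, rfl⟩ := hpN
  have hc1 : c ≠ 1 := by rintro rfl; exact hN (by simpa using hp)
  have hc2 : ¬ 2 ∣ c := fun h => h2 (h.mul_left p)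
  have hc3 : c ≠ 3 := by rintro rfl; exact h3 (dvd_mul_left 3 p)
  have hc5 : 5 ≤ c := by omega
  calc 5 * p ≤ c * p := Nat.mul_le_mul_right p hc5
    _ = p * c := mul_comm c p

theorem Nat.two_pow_two_pow_eq_four_mul {n : ℕ} (hn : 0 < n) :
    2 ^ 2 ^ n = 4 * 2 ^ (2 ^ n - 2) := by
  have := Nat.one_lt_two_pow hn.ne'
  calc 2 ^ 2 ^ n = 2 ^ (2 + (2 ^ n - 2)) := by congr 1; omega
    _ = 4 * 2 ^ (2 ^ n - 2) := pow_add 2 2 _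

theorem Nat.le_of_prime_dvd_fermatNumber {n p : ℕ} (hn : 0 < n) (hF : ¬ (fermatNumber n).Prime)
    (hp : p.Prime) (hpF : p ∣ fermatNumber n) : p ≤ 2 ^ (2 ^ n - 2) := by
  have h2 : ¬ 2 ∣ fermatNumber n := (odd_fermatNumber n).not_two_dvd_nat
  have h3 : ¬ 3 ∣ fermatNumber n := fun h =>
    absurd ((coprime_fermatNumber_fermatNumber hn.ne).eq_one_of_dvd h) (by decide)
  have h5 := five_mul_le_of_prime_dvd hp hpF hF h2 h3
  have := two_pow_two_pow_eq_four_mul hn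
  unfold fermatNumber at h5
  omega

theorem stmt7_general (n : ℕ) (a : ℕ)
    (hcomp : ¬ Nat.Prime (2 ^ 2 ^ n + 1))
    (hpsp : a ^ (2 ^ 2 ^ n + 1 - 1) ≡ 1 [MOD 2 ^ 2 ^ n + 1]) :
    a ^ ((2 ^ 2 ^ n + 1 - 1) / 4) ≡ 1 [MOD 2 ^ 2 ^ n + 1] := by
  obtain rfl | hn := n.eq_zero_or_pos
  · exact absurd Nat.prime_three hcomp
  have hquarter : 2 ^ 2 ^ n / 4 = 2 ^ (2 ^ n - 2) := by
    rw [two_pow_two_pow_eq_four_mul hn, Nat.mul_div_cancel_left _ four_pos]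
  rw [Nat.add_sub_cancel] at hpsp ⊢
  rw [hquarter]
  refine Nat.ModEq.of_forall_prime_pow_dvd fun p k hp hk hpk => ?_
  have hpF : p ∣ fermatNumber n := (dvd_pow_self p hk.ne').trans hpk
  exact (hpsp.of_dvd hpk).pow_two_pow_of_sub_one_le hp ((odd_fermatNumber n).of_dvd_nat hpF)
    ((Nat.sub_le p 1).trans (le_of_prime_dvd_fermatNumber hn hcomp hp hpF))

theorem stmt7 (n : ℕ) (hn : 5 ≤ n) (a : ℕ) (ha : Nat.Coprime a (2 ^ 2 ^ n + 1))
    (hcomp : ¬ Nat.Prime (2 ^ 2 ^ n + 1))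
    (hpsp : a ^ (2 ^ 2 ^ n + 1 - 1) ≡ 1 [MOD 2 ^ 2 ^ n + 1]) :
    a ^ ((2 ^ 2 ^ n + 1 - 1) / 4) ≡ 1 [MOD 2 ^ 2 ^ n + 1] :=
  stmt7_general n a hcomp hpsp
end

section
/- Sufficient condition for primality: let n ≥ 5 and let a be coprime to F_n = 2^(2^n) + 1. If a^((F_n - 1)/4) ≡ -1 (mod F_n), then F_n is prime. -/
/-!
A Proth-type argument. If `a ^ 2 ^ j ≡ -1` modulo an odd `N`, then for every prime `p ∣ N` the
class of `a` has order exactly `2 ^ (j + 1)` in `(ZMod p)ˣ`, so `p ≡ 1 [MOD 2 ^ (j + 1)]` and in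
particular `p > 2 ^ (j + 1)`. A composite `N` has a prime factor with `p ^ 2 ≤ N`, which is
impossible as soon as `N < (2 ^ (j + 1) + 1) ^ 2`. For `N = F_n` and `j = 2 ^ n - 2` this bound
always holds.
-/

open Nat in
theorem Nat.prime_of_pow_two_pow_eq_neg_one {N a j : ℕ} (hN : 1 < N) (hodd : Odd N)
    (hbound : N < (2 ^ (j + 1) + 1) ^ 2) (h : (a : ZMod N) ^ 2 ^ j = -1) : N.Prime := by
  by_contra hcomp
  set p := N.minFac
  have hp : p.Prime := minFac_prime hN.ne'
  have hp2 : p ≠ 2 := fun h2 => hodd.not_two_dvd_nat (h2 ▸ minFac_dvd N)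
  have hNdvd : N ∣ a ^ 2 ^ j + 1 := by
    rw [← ZMod.natCast_eq_zero_iff]
    push_cast
    rw [h, neg_add_cancel]
  obtain ⟨k, hk⟩ := pow_pow_add_primeFactors_one_lt hp hp2 ((minFac_dvd N).trans hNdvd)
  have hk0 : k ≠ 0 := by
    rintro rfl
    exact hp.one_lt.ne' (by simpa using hk)
  have hp_ge : 2 ^ (j + 1) + 1 ≤ p := by
    rw [hk]
    exact Nat.add_le_add_right (Nat.le_mul_of_pos_left _ (Nat.pos_of_ne_zero hk0)) 1
  have hsq : p ^ 2 ≤ N := minFac_sq_le_self (by omega) hcomp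
  have hsq_ge := Nat.pow_le_pow_left hp_ge 2
  omega

theorem stmt8_general (n : ℕ) (hn : 5 ≤ n) (a : ℕ)
    (h : (a : ZMod (2 ^ 2 ^ n + 1)) ^ ((2 ^ 2 ^ n + 1 - 1) / 4) = -1) :
    Nat.Prime (2 ^ 2 ^ n + 1) := by
  obtain ⟨j, hj⟩ : ∃ j, 2 ^ n = j + 2 :=
    ⟨2 ^ n - 2, by have := Nat.pow_le_pow_right two_pos (show 1 ≤ n by omega); omega⟩
  have hexp : (2 ^ 2 ^ n + 1 - 1) / 4 = 2 ^ j := by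
    rw [hj, Nat.add_sub_cancel, pow_add]
    simp
  refine Nat.prime_of_pow_two_pow_eq_neg_one (a := a) (j := j) ?_ (Nat.odd_fermatNumber n) ?_
    (hexp ▸ h)
  · exact Nat.succ_lt_succ (by positivity)
  · rw [hj, pow_succ, pow_succ]
    nlinarith [Nat.one_le_two_pow (n := j)]

theorem stmt8 (n : ℕ) (hn : 5 ≤ n) (a : ℕ) (ha : Nat.Coprime a (2 ^ 2 ^ n + 1))
    (h : (a : ZMod (2 ^ 2 ^ n + 1)) ^ ((2 ^ 2 ^ n + 1 - 1) / 4) = -1) :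
    Nat.Prime (2 ^ 2 ^ n + 1) :=
  stmt8_general n hn a h
end

section
/- Fourth-root restriction: for every n ≥ 5, 3^((F_n - 1)/4) is not congruent to -1 modulo F_n, where F_n = 2^(2^n) + 1. -/
/-!
Suppose `3 ^ 2 ^ (2 ^ n - 2) ≡ -1 (mod Fₙ)`. Then every prime factor `p` of `Fₙ` divides
`3 ^ 2 ^ (2 ^ n - 2) + 1`, so `p ≡ 1 (mod 2 ^ (2 ^ n - 1))` and `p ^ 2 > Fₙ`: hence `Fₙ` is prime.
Squaring the congruence gives `3 ^ ((Fₙ - 1) / 2) ≡ 1`, so `3` is a square mod `Fₙ` by Euler's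
criterion. But `Fₙ ≡ 1 (mod 4)` and `Fₙ ≡ 2 (mod 3)` for `n ≥ 1`, so by quadratic reciprocity
`3` is a non-residue.
-/

theorem ZMod.not_isSquare_three_of_mod_four_eq_one_of_mod_three_eq_two {p : ℕ} [Fact p.Prime]
    (hp4 : p % 4 = 1) (hp3 : p % 3 = 2) : ¬IsSquare (3 : ZMod p) := by
  rw [← Nat.cast_ofNat, ZMod.exists_sq_eq_prime_iff_of_mod_four_eq_one hp4 (by decide),
    ← ZMod.natCast_mod, hp3]
  decide

namespace Nat

theorem prime_of_pow_two_pow_eq_neg_one_of_lt_sq {N a k : ℕ} (hN : 1 < N) (hodd : Odd N)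
    (hlt : N < (2 ^ (k + 1) + 1) ^ 2) (h : (a : ZMod N) ^ 2 ^ k = -1) : N.Prime := by
  by_contra hnp
  have hp : N.minFac.Prime := minFac_prime hN.ne'
  have hp2 : N.minFac ≠ 2 := fun h2 =>
    hodd.not_two_dvd_nat (h2 ▸ minFac_dvd N)
  have hdvd : N.minFac ∣ a ^ 2 ^ k + 1 := by
    refine (minFac_dvd N).trans ((ZMod.natCast_eq_zero_iff _ _).mp ?_)
    push_cast
    rw [h, neg_add_cancel]
  obtain ⟨j, hj⟩ := pow_pow_add_primeFactors_one_lt hp hp2 hdvd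
  have hj0 : j ≠ 0 := by
    rintro rfl
    rw [zero_mul, zero_add] at hj
    exact hp.one_lt.ne' hj
  have hle : 2 ^ (k + 1) + 1 ≤ N.minFac := by
    rw [hj]; nlinarith [Nat.one_le_iff_ne_zero.mpr hj0]
  have := minFac_sq_le_self (by omega) hnp
  have := Nat.pow_le_pow_left hle 2
  omega

theorem fermatNumber_mod_four {n : ℕ} (hn : n ≠ 0) : fermatNumber n % 4 = 1 := by
  obtain ⟨m, rfl⟩ := exists_eq_succ_of_ne_zero hn
  rw [fermatNumber, pow_succ, pow_mul', Nat.add_mod, Nat.pow_mod]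
  simp

theorem fermatNumber_mod_three {n : ℕ} (hn : n ≠ 0) : fermatNumber n % 3 = 2 := by
  obtain ⟨m, rfl⟩ := exists_eq_succ_of_ne_zero hn
  rw [fermatNumber, pow_succ, pow_mul', Nat.add_mod, Nat.pow_mod]
  simp

theorem three_pow_two_pow_two_pow_sub_two_ne_neg_one {n : ℕ} (hn : n ≠ 0) :
    (3 : ZMod (fermatNumber n)) ^ 2 ^ (2 ^ n - 2) ≠ -1 := by
  intro h
  obtain ⟨m, hm⟩ : ∃ m, 2 ^ n = m + 2 := ⟨2 ^ n - 2, by have := Nat.le_self_pow hn 2; omega⟩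
  have hprime : (fermatNumber n).Prime := by
    refine prime_of_pow_two_pow_eq_neg_one_of_lt_sq (a := 3)
      (one_lt_two.trans (two_lt_fermatNumber n)) (odd_fermatNumber n) ?_ (by exact_mod_cast h)
    rw [fermatNumber, hm, Nat.add_sub_cancel, pow_succ]
    nlinarith [Nat.two_pow_pos (m + 1)]
  have := Fact.mk hprime
  have h3 : (3 : ZMod (fermatNumber n)) ≠ 0 := fun h0 => by simp [h0] at h
  refine ZMod.not_isSquare_three_of_mod_four_eq_one_of_mod_three_eq_two
    (fermatNumber_mod_four hn) (fermatNumber_mod_three hn) ((ZMod.euler_criterion _ h3).mpr ?_)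
  have hhalf : fermatNumber n / 2 = 2 ^ (2 ^ n - 2) * 2 := by
    rw [fermatNumber, hm, Nat.add_sub_cancel, ← pow_succ, pow_succ 2 (m + 1)]
    omega
  rw [hhalf, pow_mul, h, neg_one_sq]

end Nat

theorem stmt14_general (n : ℕ) :
    (3 : ZMod (2 ^ 2 ^ n + 1)) ^ ((2 ^ 2 ^ n + 1 - 1) / 4) ≠ -1 := by
  rcases eq_or_ne n 0 with rfl | hn
  · -- `(F₀ - 1) / 4` truncates to `0`
    decide
  rw [Nat.add_sub_cancel, show 4 = 2 ^ 2 from rfl,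
    Nat.pow_div (Nat.le_self_pow hn 2) two_pos]
  exact Nat.three_pow_two_pow_two_pow_sub_two_ne_neg_one hn

theorem stmt14 (n : ℕ) (hn : 5 ≤ n) :
    (3 : ZMod (2 ^ 2 ^ n + 1)) ^ ((2 ^ 2 ^ n + 1 - 1) / 4) ≠ -1 :=
  stmt14_general n
end

section
/- Pseudoprimality characterization for base 3: for n ≥ 5, F_n = 2^(2^n) + 1 is a Fermat pseudoprime to base 3 (composite with 3^(F_n - 1) ≡ 1 mod F_n) if and only if 3^((F_n - 1)/4) ≡ 1 (mod F_n). -/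
lemma aux16 (j : ℕ) (hj : 30 ≤ j) (hj2 : 2 ∣ j) :
    (¬ Nat.Prime (2 ^ (j+2) + 1) ∧
      3 ^ (2 ^ (j+2)) ≡ 1 [MOD 2 ^ (j+2) + 1]) ↔
    3 ^ (2 ^ j) ≡ 1 [MOD 2 ^ (j+2) + 1] := by
  have hx1 : 2 ^ (j+2) = 2 ^ j * 4 := by ring
  have hx2 : 2 ^ (j+2) = 2 * 2 ^ (j+1) := by ring
  have hx3 : 2 ^ (j+1) = 2 * 2 ^ j := by ring
  have hjbig : 2 ≤ 2 ^ j := by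
    calc (2:ℕ) = 2^1 := by norm_num
    _ ≤ 2^j := Nat.pow_le_pow_right (by norm_num) (by omega)
  -- N % 3 = 2
  have hN3 : (2 ^ (j+2) + 1) % 3 = 2 := by
    obtain ⟨t, rfl⟩ := hj2
    have h4 : (4:ℕ) ^ (t+1) ≡ 1 ^ (t+1) [MOD 3] := Nat.ModEq.pow _ (by decide)
    have h2m : 2 ^ (2*t+2) = 4 ^ (t+1) := by
      rw [show 2*t+2 = 2*(t+1) by ring, pow_mul]; norm_num
    simp only [one_pow] at h4
    unfold Nat.ModEq at h4
    omega
  have hNodd : ¬ 2 ∣ (2 ^ (j+2) + 1) := by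
    have : 2 ∣ 2 ^ (j+2) := dvd_pow_self 2 (by omega)
    omega
  constructor
  · rintro ⟨hcomp, hF⟩
    by_contra hmod
    have hone : 1 ≤ 3 ^ 2 ^ j := Nat.one_le_pow _ _ (by norm_num)
    have hndvd : ¬ (2 ^ (j+2) + 1) ∣ 3 ^ 2 ^ j - 1 := fun h =>
      hmod ((Nat.modEq_iff_dvd' hone).mpr h).symm
    rw [Nat.dvd_iff_prime_pow_dvd_dvd] at hndvd
    push_neg at hndvd
    obtain ⟨p, k, hp, hpkN, hpk1⟩ := hndvd
    have hpp : p.Prime := hp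
    have hk : 1 ≤ k := by
      by_contra hk
      exact hpk1 (by simp [Nat.eq_zero_of_not_pos hk])
    have hpodd : p ≠ 2 := by
      rintro rfl
      exact hNodd (dvd_trans (dvd_pow_self 2 (by omega : k ≠ 0)) hpkN)
    have hp3 : 3 ≤ p := by
      have := hpp.two_le; omega
    have hP2 : 2 ≤ p ^ k := le_trans hpp.two_le (Nat.le_self_pow (by omega) p)
    haveI : NeZero (p ^ k) := ⟨by omega⟩
    have h3N : Nat.Coprime 3 (2 ^ (j+2) + 1) := by
      rw [Nat.Prime.coprime_iff_not_dvd Nat.prime_three]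
      omega
    have h3P : Nat.Coprime 3 (p ^ k) := Nat.Coprime.coprime_dvd_right hpkN h3N
    have hFP : (3:ℕ) ^ 2 ^ (j+2) ≡ 1 [MOD p ^ k] := Nat.ModEq.of_dvd hpkN hF
    have haP : (3 : ZMod (p ^ k)) ^ 2 ^ (j+2) = 1 := by
      have h := (ZMod.natCast_eq_natCast_iff _ _ _).mpr hFP
      push_cast at h
      simpa using h
    have hneP : (3 : ZMod (p ^ k)) ^ 2 ^ j ≠ 1 := by
      intro hcon
      apply hpk1
      have h : (3:ℕ) ^ 2 ^ j ≡ 1 [MOD p ^ k] := by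
        rw [← ZMod.natCast_eq_natCast_iff]
        push_cast
        simpa using hcon
      exact (Nat.modEq_iff_dvd' hone).mp h.symm
    have he1 : orderOf (3 : ZMod (p ^ k)) ∣ 2 ^ (j+2) := orderOf_dvd_of_pow_eq_one haP
    have he2 : ¬ orderOf (3 : ZMod (p ^ k)) ∣ 2 ^ j := fun hd =>
      hneP (orderOf_dvd_iff_pow_eq_one.mp hd)
    obtain ⟨i, hi, hei⟩ := (Nat.dvd_prime_pow Nat.prime_two).mp he1
    have hij : j + 1 ≤ i := by
      by_contra hic
      exact he2 (hei ▸ pow_dvd_pow 2 (by omega : i ≤ j))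
    have hdvd_e : 2 ^ (j+1) ∣ orderOf (3 : ZMod (p ^ k)) := hei ▸ pow_dvd_pow 2 hij
    have hphi : (3 : ZMod (p ^ k)) ^ Nat.totient (p ^ k) = 1 := by
      have h := (ZMod.natCast_eq_natCast_iff _ _ _).mpr (Nat.ModEq.pow_totient h3P)
      push_cast at h
      simpa using h
    have he_phi : orderOf (3 : ZMod (p ^ k)) ∣ p ^ (k-1) * (p - 1) := by
      have h := orderOf_dvd_of_pow_eq_one hphi
      rwa [Nat.totient_prime_pow hpp hk] at h
    have hcop : Nat.Coprime (orderOf (3 : ZMod (p ^ k))) (p ^ (k-1)) := by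
      rw [hei]
      exact Nat.Coprime.pow _ _ ((Nat.coprime_primes Nat.prime_two hpp).mpr (Ne.symm hpodd))
    have he_p1 : orderOf (3 : ZMod (p ^ k)) ∣ p - 1 :=
      (Nat.Coprime.dvd_of_dvd_mul_left hcop he_phi)
    have hple : 2 ^ (j+1) ≤ p - 1 := Nat.le_of_dvd (by omega) (hdvd_e.trans he_p1)
    have hk1 : k = 1 := by
      by_contra hk2
      have h2k : p ^ 2 ∣ 2 ^ (j+2) + 1 := dvd_trans (pow_dvd_pow p (by omega)) hpkN
      have hle : p ^ 2 ≤ 2 ^ (j+2) + 1 := Nat.le_of_dvd (by positivity) h2k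
      have hpge : 2 ^ (j+1) + 1 ≤ p := by omega
      have hsq : (2 ^ (j+1) + 1) ^ 2 ≤ p ^ 2 := Nat.pow_le_pow_left hpge 2
      have hexp : (2 ^ (j+1) + 1) ^ 2 = 2 ^ (j+1) * 2 ^ (j+1) + 2 * 2 ^ (j+1) + 1 := by ring
      have hpos : 1 ≤ 2 ^ (j+1) * 2 ^ (j+1) := Nat.one_le_iff_ne_zero.mpr (by positivity)
      rw [hexp] at hsq
      omega
    rw [hk1, pow_one] at hpkN
    have hpneN : p ≠ 2 ^ (j+2) + 1 := fun h => hcomp (h ▸ hpp)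
    obtain ⟨c, hc⟩ := hpkN
    have hcodd : ¬ 2 ∣ c := fun h2c => hNodd (hc ▸ Dvd.dvd.mul_left h2c p)
    have hc3 : 3 ≤ c := by
      rcases Nat.lt_or_ge c 3 with h | h
      · interval_cases c
        · omega
        · omega
        · omega
      · exact h
    have h3p : 3 * p ≤ 2 ^ (j+2) + 1 := by
      calc 3 * p ≤ c * p := Nat.mul_le_mul_right p hc3
      _ = 2 ^ (j+2) + 1 := by rw [hc]; ring
    omega
  · intro h
    have hFerm : (3:ℕ) ^ 2 ^ (j+2) ≡ 1 [MOD 2 ^ (j+2) + 1] := by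
      have h2 := h.pow 4
      rw [← pow_mul, ← hx1] at h2
      simpa using h2
    refine ⟨?_, hFerm⟩
    intro hprime
    haveI : Fact (Nat.Prime (2 ^ (j+2) + 1)) := ⟨hprime⟩
    have h3ne : ((3:ℕ) : ZMod (2 ^ (j+2) + 1)) ≠ 0 := by
      intro h0
      rw [ZMod.natCast_eq_zero_iff] at h0
      have := Nat.le_of_dvd (by norm_num) h0
      omega
    have hsq : IsSquare ((3:ℕ) : ZMod (2 ^ (j+2) + 1)) := by
      rw [ZMod.euler_criterion _ h3ne]
      have hhalf : (2 ^ (j+2) + 1) / 2 = 2 ^ (j+1) := by omega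
      have hzm : ((3:ℕ) : ZMod (2 ^ (j+2) + 1)) ^ 2 ^ j = 1 := by
        have h7 := (ZMod.natCast_eq_natCast_iff _ _ _).mpr h
        push_cast at h7
        simpa using h7
      rw [hhalf, hx3, mul_comm, pow_mul, hzm, one_pow]
    have hleg1 : legendreSym (2 ^ (j+2) + 1) 3 = 1 := by
      have h9 := (legendreSym.eq_one_iff' (p := 2 ^ (j+2) + 1) (a := 3)
        (by exact_mod_cast h3ne)).mpr (by exact_mod_cast hsq)
      exact_mod_cast h9
    have hNmod4 : (2 ^ (j+2) + 1) % 4 = 1 := by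
      have h4 : (4:ℕ) ∣ 2 ^ (j+2) := by
        exact ⟨2 ^ j, by rw [hx1]; ring⟩
      omega
    have hrec := legendreSym.quadratic_reciprocity_one_mod_four
      (p := 2 ^ (j+2) + 1) (q := 3) hNmod4 (by norm_num)
    have hlegm : legendreSym 3 (((2 ^ (j+2) + 1 : ℕ)):ℤ) = -1 := by
      rw [legendreSym.mod 3 _]
      have hmodN : (((2 ^ (j+2) + 1 : ℕ)):ℤ) % ((3:ℕ):ℤ) = 2 := by omega
      rw [hmodN]
      decide
    have h31 : ((3:ℕ):ℤ) = 3 := by norm_num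
    rw [h31, hleg1] at hrec
    rw [hrec] at hlegm
    norm_num at hlegm

theorem stmt16 (n : ℕ) (hn : 5 ≤ n) :
    (¬ Nat.Prime (2 ^ 2 ^ n + 1) ∧
      3 ^ (2 ^ 2 ^ n + 1 - 1) ≡ 1 [MOD 2 ^ 2 ^ n + 1]) ↔
    3 ^ ((2 ^ 2 ^ n + 1 - 1) / 4) ≡ 1 [MOD 2 ^ 2 ^ n + 1] := by
  have hm32 : 32 ≤ 2 ^ n := by
    calc (32:ℕ) = 2^5 := by norm_num
    _ ≤ 2^n := Nat.pow_le_pow_right (by norm_num) hn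
  have hj2 : 2 ∣ 2 ^ n := dvd_pow_self 2 (by omega)
  obtain ⟨j, hjm⟩ : ∃ j, 2 ^ n = j + 2 := ⟨2 ^ n - 2, by omega⟩
  have hj30 : 30 ≤ j := by omega
  have hj2' : 2 ∣ j := by omega
  have hsub : 2 ^ (j+2) + 1 - 1 = 2 ^ (j+2) := by simp
  have hdiv : 2 ^ (j+2) / 4 = 2 ^ j := by
    rw [show 2 ^ (j+2) = 2 ^ j * 4 by ring]
    simp
  rw [hjm, hsub, hdiv]
  exact aux16 j hj30 hj2'
end
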